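/- Let P be the probability measure on ℕ with P({n}) = 1/2^n. For every integer n ≥ 4, both sets {1, …, n−3, n−2, Av[n−1,n], Av[n+1,∞)} and {1, …, n−3, Av[n−2,n−1], Av[n,n+1], Av[n+2,∞)} attain the n-th quantization error V_n = 2^{3−n}/3; in particular the optimal set of n-means is not unique. -/

import Mathlib

/-- Distortion error of a nonempty finite set α for the measure P({n}) = 1/2^n, n ≥ 1. -/
noncomputable def errG (α : Finset ℝ) (h : α.Nonempty) : ℝ :=
  ∑' n : ℕ, (1/2^(n+1) : ℝ) * α.inf' h (fun a => ((n+1 : ℝ) - a)^2)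

/-- Conditional expectation E(X | X ∈ {k,…,l}). -/
noncomputable def avG (k l : ℕ) : ℝ :=
  (∑ j ∈ Finset.Icc k l, (j : ℝ)/2^j) / (∑ j ∈ Finset.Icc k l, (1 : ℝ)/2^j)

/-- Conditional expectation E(X | X ≥ k). -/
noncomputable def avGTail (k : ℕ) : ℝ :=
  (∑' n : ℕ, ((n+k : ℝ))/2^(n+k)) / (∑' n : ℕ, (1 : ℝ)/2^(n+k))

/-! The geometric law is memoryless: the part of `errG α` coming from the points `j > N` is
`2⁻ᴺ` times the error of the code book `α - N` (`errG_eq_sum_add_shift`). Removing the leftmost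
point `a₁` of a code book and cutting at the midpoint of its two leftmost points therefore gives
`V (k + 1) ≥ min_N (∑_{j ≤ N} 2⁻ʲ (j - a₁)² + 2⁻ᴺ V k)`, and a case analysis on `N ≤ 4` turns this
into `V k ≥ 2 / (3 · 2^(k-2))` for `k ≥ 2`. Both code books of the theorem are `{1, …, N}` followed
by `N + β` for `β = {4/3, 4}` (`N = n - 2`) or `β = {4/3, 10/3, 6}` (`N = n - 3`), whose errors
`2/3` and `1/3` make `2⁻ᴺ errG β` meet this bound. -/

open Finset

lemma hasSum_errG_singleton (a : ℝ) :
    HasSum (fun n : ℕ => (1 / 2 ^ (n + 1) : ℝ) * ((n + 1 : ℝ) - a) ^ 2) ((a - 2) ^ 2 + 2) := by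
  have hr : ‖(1 / 2 : ℝ)‖ < 1 := by norm_num
  have h0 := hasSum_choose_mul_geometric_of_norm_lt_one 0 hr
  have h1 := hasSum_choose_mul_geometric_of_norm_lt_one 1 hr
  have h2 := hasSum_choose_mul_geometric_of_norm_lt_one 2 hr
  have hterm : (fun n : ℕ => (1 / 2 ^ (n + 1) : ℝ) * ((n + 1 : ℝ) - a) ^ 2) = fun n =>
      ((n + 2).choose 2 * (1 / 2) ^ n - (1 + 2 * a) / 2 * ((n + 1).choose 1 * (1 / 2) ^ n))
        + a ^ 2 / 2 * ((n + 0).choose 0 * (1 / 2) ^ n) := by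
    funext n
    simp only [Nat.cast_choose_two, Nat.choose_one_right, Nat.choose_zero_right, div_pow, one_pow]
    push_cast
    field_simp
    ring
  rw [hterm, show (a - 2) ^ 2 + 2 = 1 / (1 - 1 / 2) ^ (2 + 1)
    - (1 + 2 * a) / 2 * (1 / (1 - 1 / 2) ^ (1 + 1)) + a ^ 2 / 2 * (1 / (1 - 1 / 2) ^ (0 + 1)) by ring]
  exact (h2.sub (h1.mul_left _)).add (h0.mul_left _)

lemma errG_singleton (a : ℝ) (h : ({a} : Finset ℝ).Nonempty) : errG {a} h = (a - 2) ^ 2 + 2 := by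
  simpa [errG] using (hasSum_errG_singleton a).tsum_eq

lemma summable_errG (α : Finset ℝ) (h : α.Nonempty) :
    Summable fun n : ℕ => (1 / 2 ^ (n + 1) : ℝ) * α.inf' h (fun a => ((n + 1 : ℝ) - a) ^ 2) := by
  obtain ⟨a, ha⟩ := h
  refine (hasSum_errG_singleton a).summable.of_nonneg_of_le (fun n => ?_) (fun n => ?_)
  · exact mul_nonneg (by positivity) (le_inf' _ _ fun b _ => sq_nonneg _)
  · exact mul_le_mul_of_nonneg_left (inf'_le _ ha) (by positivity)

lemma errG_le_errG_of_inf'_le {α β : Finset ℝ} (hα : α.Nonempty) (hβ : β.Nonempty)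
    (hαβ : ∀ n : ℕ, α.inf' hα (fun a => ((n + 1 : ℝ) - a) ^ 2)
      ≤ β.inf' hβ (fun a => ((n + 1 : ℝ) - a) ^ 2)) :
    errG α hα ≤ errG β hβ :=
  (summable_errG α hα).tsum_le_tsum
    (fun n => mul_le_mul_of_nonneg_left (hαβ n) (by positivity)) (summable_errG β hβ)

lemma errG_anti {α β : Finset ℝ} (hα : α.Nonempty) (hβ : β.Nonempty) (hβα : β ⊆ α) :
    errG α hα ≤ errG β hβ :=
  errG_le_errG_of_inf'_le hα hβ fun _ => inf'_mono _ hβα hβ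

lemma errG_eq_sum_add_shift (α : Finset ℝ) (h : α.Nonempty) (N : ℕ) :
    errG α h = ∑ i ∈ range N, (1 / 2 ^ (i + 1) : ℝ) * α.inf' h (fun a => ((i + 1 : ℝ) - a) ^ 2)
      + 1 / 2 ^ N * errG (α.image (· - (N : ℝ))) (h.image _) := by
  rw [errG, ← (summable_errG α h).sum_add_tsum_nat_add N, errG, ← tsum_mul_left]
  congr 1
  refine tsum_congr fun i => ?_
  rw [inf'_image, ← mul_assoc]
  congr 1
  · rw [pow_add, pow_add]; field_simp; ring
  · congr 1; funext a; simp only [Function.comp_apply]; push_cast; ring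

noncomputable def cellError (N : ℕ) (t : ℝ) : ℝ :=
  ∑ i ∈ range N, (1 / 2 ^ (i + 1) : ℝ) * ((i + 1 : ℝ) - t) ^ 2

lemma cellError_mono {N M : ℕ} (hNM : N ≤ M) (t : ℝ) : cellError N t ≤ cellError M t :=
  sum_le_sum_of_subset_of_nonneg (range_subset_range.2 hNM) fun _ _ _ => by positivity

lemma two_thirds_le_cellError_four (t : ℝ) : 2 / 3 ≤ cellError 4 t := by
  simp only [cellError, sum_range_succ, sum_range_zero]
  nlinarith [sq_nonneg (t - 26 / 15)]

noncomputable def geomQuantError : ℕ → ℝ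
  | 0 | 1 => 2
  | k + 2 => 2 / 3 * (1 / 2) ^ k

lemma geomQuantError_le_two (k : ℕ) : geomQuantError k ≤ 2 := by
  rcases k with _ | _ | k
  · rfl
  · rfl
  · have : ((1 : ℝ) / 2) ^ k ≤ 1 := pow_le_one₀ (by norm_num) (by norm_num)
    simp only [geomQuantError]
    linarith

lemma geomQuantError_succ_le {k : ℕ} (hk : 1 ≤ k) (N : ℕ) (t : ℝ) {G : ℝ}
    (hG : geomQuantError k ≤ G) :
    geomQuantError (k + 1) ≤ cellError N t + 1 / 2 ^ N * G := by
  obtain ⟨hG0, hhalf, hsmall, hquarter⟩ : 0 ≤ G ∧ geomQuantError (k + 1) ≤ G / 2 ∧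
      geomQuantError (k + 1) ≤ 2 / 3 ∧ geomQuantError (k + 1) ≤ 1 / 6 + G / 4 := by
    obtain ⟨j, rfl⟩ := Nat.exists_eq_add_of_le' hk
    rcases j with _ | j
    · simp only [geomQuantError] at hG ⊢
      norm_num
      refine ⟨?_, ?_, ?_⟩ <;> linarith
    · have hj : ((1 : ℝ) / 2) ^ j ≤ 1 := pow_le_one₀ (by norm_num) (by norm_num)
      have hj0 : 0 ≤ ((1 : ℝ) / 2) ^ j := by positivity
      simp only [geomQuantError, pow_succ] at hG ⊢
      refine ⟨by linarith, by linarith, by nlinarith, by nlinarith⟩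
  rcases N with _ | _ | _ | _ | N
  · norm_num [cellError]; linarith
  · norm_num [cellError]; nlinarith [sq_nonneg (1 - t)]
  · norm_num [cellError, sum_range_succ]; nlinarith [sq_nonneg (t - 4 / 3)]
  · norm_num [cellError, sum_range_succ]; nlinarith [sq_nonneg (t - 11 / 7)]
  · have h4 := (two_thirds_le_cellError_four t).trans (cellError_mono (by omega : 4 ≤ N + 4) t)
    have : 0 ≤ 1 / 2 ^ (N + 4) * G := by positivity
    linarith

lemma exists_cellError_add_errG_le (α : Finset ℝ) (h : α.Nonempty) (hα : 1 < α.card) :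
    ∃ (N : ℕ) (t : ℝ) (γ : Finset ℝ) (hγ : γ.Nonempty),
      γ.card < α.card ∧ cellError N t + 1 / 2 ^ N * errG γ hγ ≤ errG α h := by
  set a₁ := α.min' h
  set β := α.erase a₁
  have ha₁ : a₁ ∈ α := α.min'_mem h
  have hβ : β.Nonempty := by
    rw [← card_pos, card_erase_of_mem ha₁]; omega
  set a₂ := β.min' hβ
  have ha₂ : a₂ ∈ β := β.min'_mem hβ
  have ha₁₂ : a₁ ≤ a₂ := α.min'_le _ (mem_of_mem_erase ha₂)
  have hβmin : ∀ b ∈ α, b ≠ a₁ → a₂ ≤ b := fun b hb hne => β.min'_le _ (mem_erase.2 ⟨hne, hb⟩)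
  -- cut at the midpoint `x` of the two leftmost points: below it `a₁` is nearest, above it `β` serves
  set x := (a₁ + a₂) / 2 with hx
  set N := ⌊x⌋₊
  refine ⟨N, a₁, β.image (· - (N : ℝ)), hβ.image _,
    card_image_le.trans_lt (card_erase_lt_of_mem ha₁), ?_⟩
  rw [errG_eq_sum_add_shift α h N]
  gcongr ?_ + _ * ?_
  · refine sum_le_sum fun i hi => ?_
    have hix : (i + 1 : ℝ) ≤ x := by
      exact_mod_cast (Nat.le_floor_iff' (Nat.succ_ne_zero i)).1 (mem_range.1 hi)
    gcongr
    refine le_inf' _ _ fun b hb => ?_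
    rcases eq_or_ne b a₁ with rfl | hne
    · rfl
    · have hb₂ := hβmin b hb hne
      nlinarith [mul_nonneg (by linarith : 0 ≤ b - a₁) (by linarith : 0 ≤ b + a₁ - 2 * (i + 1))]
  · refine errG_le_errG_of_inf'_le _ _ fun j => ?_
    have hxj : x ≤ (j + 1 : ℝ) + N := by
      linarith [Nat.lt_floor_add_one x, (Nat.cast_nonneg j : (0 : ℝ) ≤ j)]
    simp only [inf'_image, Function.comp_def]
    refine le_inf' _ _ fun b hb => ?_
    rcases eq_or_ne b a₁ with rfl | hne
    · refine (inf'_le _ ha₂).trans ?_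
      nlinarith [mul_nonneg (by linarith : 0 ≤ a₂ - a₁) (by linarith : 0 ≤ 2 * (j + 1 + N) - a₁ - a₂)]
    · exact inf'_le _ (mem_erase.2 ⟨hne, hb⟩)

theorem geomQuantError_le_errG (k : ℕ) (α : Finset ℝ) (h : α.Nonempty) (hk : α.card ≤ k) :
    geomQuantError k ≤ errG α h := by
  induction k generalizing α with
  | zero => exact absurd (card_pos.2 h) (by omega)
  | succ k ih =>
    by_cases hα : α.card = 1
    · obtain ⟨a, rfl⟩ := card_eq_one.1 hα
      rw [errG_singleton]
      nlinarith [geomQuantError_le_two (k + 1), sq_nonneg (a - 2)]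
    · have hα : 1 < α.card := by have := card_pos.2 h; omega
      obtain ⟨N, t, γ, hγ, hcard, hle⟩ := exists_cellError_add_errG_le α h hα
      exact (geomQuantError_succ_le (by omega) N t (ih γ hγ (by omega))).trans hle

lemma errG_le_of_shift_subset (N : ℕ) {α β : Finset ℝ} (hα : α.Nonempty) (hβ : β.Nonempty)
    (hint : ∀ j ∈ Icc 1 N, (j : ℝ) ∈ α) (hshift : ∀ b ∈ β, b + N ∈ α) :
    errG α hα ≤ 1 / 2 ^ N * errG β hβ := by
  rw [errG_eq_sum_add_shift α hα N]
  have hsum : ∑ i ∈ range N, (1 / 2 ^ (i + 1) : ℝ) * α.inf' hα (fun a => ((i + 1 : ℝ) - a) ^ 2)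
      ≤ 0 := by
    refine sum_nonpos fun i hi => mul_nonpos_of_nonneg_of_nonpos (by positivity) ?_
    have hi : i + 1 ∈ Icc 1 N := mem_Icc.2 ⟨by omega, mem_range.1 hi⟩
    refine (inf'_le (fun a => ((i + 1 : ℝ) - a) ^ 2) (hint _ hi)).trans_eq ?_
    simp
  have htail : errG (α.image (· - (N : ℝ))) (hα.image _) ≤ errG β hβ :=
    errG_anti _ _ fun b hb => mem_image.2 ⟨b + N, hshift b hb, add_sub_cancel_right b _⟩
  nlinarith [(by positivity : (0 : ℝ) ≤ 1 / 2 ^ N)]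

lemma errG_le_sum_add_of_mem (α : Finset ℝ) (h : α.Nonempty) (N : ℕ) {e : ℝ} (he : e ∈ α) :
    errG α h ≤ ∑ i ∈ range N, (1 / 2 ^ (i + 1) : ℝ) * α.inf' h (fun a => ((i + 1 : ℝ) - a) ^ 2)
      + 1 / 2 ^ N * ((e - N - 2) ^ 2 + 2) := by
  rw [errG_eq_sum_add_shift α h N, ← errG_singleton (e - N) (singleton_nonempty _)]
  gcongr
  exact errG_anti _ _ (singleton_subset_iff.2 (mem_image_of_mem _ he))

lemma errG_pair_le (h : ({4 / 3, 4} : Finset ℝ).Nonempty) : errG {4 / 3, 4} h ≤ 2 / 3 := by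
  refine (errG_le_sum_add_of_mem _ h 2 (by simp : (4 : ℝ) ∈ _)).trans_eq ?_
  norm_num [sum_range_succ, inf'_insert]

lemma errG_triple_le (h : ({4 / 3, 10 / 3, 6} : Finset ℝ).Nonempty) :
    errG {4 / 3, 10 / 3, 6} h ≤ 1 / 3 := by
  refine (errG_le_sum_add_of_mem _ h 4 (by simp : (6 : ℝ) ∈ _)).trans_eq ?_
  norm_num [sum_range_succ, inf'_insert]

lemma avG_self_succ (k : ℕ) : avG k (k + 1) = k + 1 / 3 := by
  rw [avG, sum_Icc_succ_top (Nat.le_succ k), sum_Icc_succ_top (Nat.le_succ k), Icc_self,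
    sum_singleton, sum_singleton]
  push_cast
  field_simp
  ring

lemma avGTail_eq (k : ℕ) : avGTail k = k + 1 := by
  have hr : ‖(1 / 2 : ℝ)‖ < 1 := by norm_num
  have hnum : (fun n : ℕ => ((n + k : ℝ)) / 2 ^ (n + k))
      = fun n : ℕ => (1 / 2 ^ k : ℝ) * (n * (1 / 2) ^ n + k * (1 / 2) ^ n) := by
    funext n; rw [pow_add, div_pow, one_pow]; field_simp
  have hden : (fun n : ℕ => (1 : ℝ) / 2 ^ (n + k)) = fun n => 1 / 2 ^ k * (1 / 2) ^ n := by
    funext n; rw [pow_add, div_pow, one_pow]; field_simp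
  rw [avGTail, hnum, hden, tsum_mul_left, tsum_mul_left,
    (hasSum_coe_mul_geometric_of_norm_lt_one hr).summable.tsum_add
      (summable_geometric_two.mul_left _), tsum_mul_left,
    tsum_coe_mul_geometric_of_norm_lt_one hr, tsum_geometric_two]
  field_simp
  norm_num
  ring

lemma geomQuantError_eq_zpow {n : ℕ} (hn : 2 ≤ n) :
    geomQuantError n = (2 : ℝ) ^ (3 - (n : ℤ)) / 3 := by
  obtain ⟨k, rfl⟩ := Nat.exists_eq_add_of_le' hn
  rw [geomQuantError, show (3 : ℤ) - ((k + 2 : ℕ) : ℤ) = 1 - k by push_cast; ring,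
    zpow_sub₀ two_ne_zero, zpow_one, zpow_natCast, div_pow, one_pow]
  ring

lemma card_image_Icc_union_le (N : ℕ) (T : Finset ℝ) :
    ((Icc 1 N).image (fun j : ℕ => (j : ℝ)) ∪ T).card ≤ N + T.card :=
  (card_union_le _ _).trans (by simpa using card_image_le (s := Icc 1 N))

lemma natCast_mem_image_Icc_union {N j : ℕ} (hj : j ∈ Icc 1 N) (T : Finset ℝ) :
    (j : ℝ) ∈ (Icc 1 N).image (fun j : ℕ => (j : ℝ)) ∪ T :=
  mem_union_left _ (mem_image_of_mem _ hj)

noncomputable def optimalSet₁ (n : ℕ) : Finset ℝ :=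
  (Icc 1 (n - 2)).image (fun j : ℕ => (j : ℝ)) ∪ {avG (n - 1) n, avGTail (n + 1)}

noncomputable def optimalSet₂ (n : ℕ) : Finset ℝ :=
  (Icc 1 (n - 3)).image (fun j : ℕ => (j : ℝ)) ∪
    {avG (n - 2) (n - 1), avG n (n + 1), avGTail (n + 2)}

lemma optimalSet₁_nonempty (n : ℕ) : (optimalSet₁ n).Nonempty := by simp [optimalSet₁]

lemma optimalSet₂_nonempty (n : ℕ) : (optimalSet₂ n).Nonempty := by simp [optimalSet₂]

lemma card_optimalSet₁_le {n : ℕ} (hn : 2 ≤ n) : (optimalSet₁ n).card ≤ n := by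
  have := (card_image_Icc_union_le (n - 2) {avG (n - 1) n, avGTail (n + 1)}).trans
    (Nat.add_le_add_left card_le_two _)
  rw [optimalSet₁]
  omega

lemma card_optimalSet₂_le {n : ℕ} (hn : 3 ≤ n) : (optimalSet₂ n).card ≤ n := by
  have := (card_image_Icc_union_le (n - 3)
    {avG (n - 2) (n - 1), avG n (n + 1), avGTail (n + 2)}).trans
    (Nat.add_le_add_left card_le_three _)
  rw [optimalSet₂]
  omega

lemma errG_optimalSet₁_le {n : ℕ} (hn : 2 ≤ n) (h : (optimalSet₁ n).Nonempty) :
    errG (optimalSet₁ n) h ≤ geomQuantError n := by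
  obtain ⟨k, rfl⟩ := Nat.exists_eq_add_of_le' hn
  calc errG _ h ≤ 1 / 2 ^ k * errG {4 / 3, 4} (insert_nonempty _ _) := by
        refine errG_le_of_shift_subset k h _ (fun j hj => ?_) fun b hb => ?_
        · exact natCast_mem_image_Icc_union (by simpa using hj) _
        · simp only [mem_insert, mem_singleton] at hb
          rw [optimalSet₁]
          rcases hb with rfl | rfl
          · convert mem_union_right _ (mem_insert_self _ _) using 1
            rw [show k + 2 - 1 = k + 1 from rfl, avG_self_succ (k + 1)]
            push_cast; ring
          · convert mem_union_right _ (mem_insert_of_mem (mem_singleton_self _)) using 1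
            rw [avGTail_eq]
            push_cast; ring
    _ ≤ 1 / 2 ^ k * (2 / 3) := by gcongr; exact errG_pair_le _
    _ = geomQuantError (k + 2) := by simp [geomQuantError]; ring

lemma errG_optimalSet₂_le {n : ℕ} (hn : 3 ≤ n) (h : (optimalSet₂ n).Nonempty) :
    errG (optimalSet₂ n) h ≤ geomQuantError n := by
  obtain ⟨k, rfl⟩ := Nat.exists_eq_add_of_le' hn
  calc errG _ h ≤ 1 / 2 ^ k * errG {4 / 3, 10 / 3, 6} (insert_nonempty _ _) := by
        refine errG_le_of_shift_subset k h _ (fun j hj => ?_) fun b hb => ?_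
        · exact natCast_mem_image_Icc_union (by simpa using hj) _
        · simp only [mem_insert, mem_singleton] at hb
          rw [optimalSet₂]
          rcases hb with rfl | rfl | rfl
          · convert mem_union_right _ (mem_insert_self _ _) using 1
            rw [show k + 3 - 2 = k + 1 from rfl, show k + 3 - 1 = k + 1 + 1 from rfl,
              avG_self_succ]
            push_cast; ring
          · convert mem_union_right _ (mem_insert_of_mem (mem_insert_self _ _)) using 1
            rw [avG_self_succ]
            push_cast; ring
          · convert mem_union_right _ (mem_insert_of_mem (mem_insert_of_mem
              (mem_singleton_self _))) using 1
            rw [avGTail_eq]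
            push_cast; ring
    _ ≤ 1 / 2 ^ k * (1 / 3) := by gcongr; exact errG_triple_le _
    _ = geomQuantError (k + 3) := by simp [geomQuantError]; ring

lemma optimalSet₁_ne_optimalSet₂ {n : ℕ} (hn : 3 ≤ n) : optimalSet₁ n ≠ optimalSet₂ n := by
  intro heq
  have hmem : avG (n - 1) n ∈ optimalSet₂ n := heq ▸ mem_union_right _ (mem_insert_self _ _)
  obtain ⟨k, rfl⟩ := Nat.exists_eq_add_of_le' hn
  simp [optimalSet₂, avG_self_succ, avGTail_eq] at hmem
  rcases hmem with hmem | ⟨j, ⟨-, hjk⟩, hj⟩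
  · linarith
  · have : (j : ℝ) ≤ k := by exact_mod_cast hjk
    linarith

theorem stmt16 (n : ℕ) (hn : 4 ≤ n) :
    sInf {v : ℝ | ∃ (α : Finset ℝ) (h : α.Nonempty), α.card ≤ n ∧ v = errG α h}
      = (2 : ℝ)^(3 - (n : ℤ)) / 3 ∧
    errG ((Finset.Icc 1 (n-2)).image (fun j : ℕ => (j : ℝ)) ∪ {avG (n-1) n, avGTail (n+1)})
        (by simp) = (2 : ℝ)^(3 - (n : ℤ)) / 3 ∧
    errG ((Finset.Icc 1 (n-3)).image (fun j : ℕ => (j : ℝ)) ∪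
        {avG (n-2) (n-1), avG n (n+1), avGTail (n+2)})
        (by simp) = (2 : ℝ)^(3 - (n : ℤ)) / 3 ∧
    ((Finset.Icc 1 (n-2)).image (fun j : ℕ => (j : ℝ)) ∪ {avG (n-1) n, avGTail (n+1)}) ≠
      ((Finset.Icc 1 (n-3)).image (fun j : ℕ => (j : ℝ)) ∪
        {avG (n-2) (n-1), avG n (n+1), avGTail (n+2)}) := by
  rw [← geomQuantError_eq_zpow (by omega : 2 ≤ n)]
  have herr₁ : errG (optimalSet₁ n) (optimalSet₁_nonempty n) = geomQuantError n :=
    (errG_optimalSet₁_le (by omega) _).antisymm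
      (geomQuantError_le_errG n _ _ (card_optimalSet₁_le (by omega)))
  have herr₂ : errG (optimalSet₂ n) (optimalSet₂_nonempty n) = geomQuantError n :=
    (errG_optimalSet₂_le (by omega) _).antisymm
      (geomQuantError_le_errG n _ _ (card_optimalSet₂_le (by omega)))
  refine ⟨IsLeast.csInf_eq ⟨⟨_, _, card_optimalSet₁_le (by omega), herr₁.symm⟩, ?_⟩,
    herr₁, herr₂, optimalSet₁_ne_optimalSet₂ (by omega)⟩
  rintro v ⟨α, h, hα, rfl⟩
  exact geomQuantError_le_errG n α h hα
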